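/- Let 𝔛 be an ℝ-vector space, ∇ : 𝔛 × 𝔛 → 𝔛 an ℝ-bilinear map, and J : 𝔛 → 𝔛 an ℝ-linear map with J ∘ J = id. Define Q(X,Y) := (1/4)·[(∇_{JY}J)X + J((∇_Y J)X) + 2·J((∇_X J)Y)], where (∇_X J)Y := ∇_X(JY) − J(∇_X Y). Then for all X, Y ∈ 𝔛, Q(X, JY) − J(Q(X,Y)) = −(∇_X J)Y. -/

import Mathlib

/-! Since `J² = id`, each `(∇_X J)` anticommutes with `J`. Hence replacing `Y` by `JY` in `Q(X,Y)`
swaps its first two terms with their images under `J`, so they cancel against `J(Q(X,Y))`, while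
the last term contributes `-(2 + 2)/4 · (∇_X J)Y`. -/

/-- The covariant derivative of `J` with respect to a connection `op`:
`(∇_X J) Y := ∇_X (J Y) − J (∇_X Y)`. -/
def covDerJ {𝔛 : Type*} [AddCommGroup 𝔛] [Module ℝ 𝔛] (J : 𝔛 →ₗ[ℝ] 𝔛)
    (op : 𝔛 → 𝔛 → 𝔛) : 𝔛 → 𝔛 → 𝔛 :=
  fun X Y => op X (J Y) - J (op X Y)

/-- `Q(X,Y) := (1/4)·[(∇_{JY}J)X + J((∇_Y J)X) + 2·J((∇_X J)Y)]`. -/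
noncomputable def Qmap {𝔛 : Type*} [AddCommGroup 𝔛] [Module ℝ 𝔛] (J : 𝔛 →ₗ[ℝ] 𝔛)
    (op : 𝔛 → 𝔛 → 𝔛) : 𝔛 → 𝔛 → 𝔛 :=
  fun X Y => (1 / 4 : ℝ) •
    (covDerJ J op (J Y) X + J (covDerJ J op Y X) + (2 : ℝ) • J (covDerJ J op X Y))

section Involution

variable {𝔛 : Type*} [AddCommGroup 𝔛] [Module ℝ 𝔛] {J : 𝔛 →ₗ[ℝ] 𝔛}

theorem covDerJ_apply_J (hJ : ∀ X, J (J X) = X) (op : 𝔛 → 𝔛 → 𝔛) (X Y : 𝔛) :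
    covDerJ J op X (J Y) = -J (covDerJ J op X Y) := by
  simp only [covDerJ, map_sub, hJ, neg_sub]

theorem Qmap_apply_J_sub_J_Qmap (hJ : ∀ X, J (J X) = X) (op : 𝔛 → 𝔛 → 𝔛) (X Y : 𝔛) :
    Qmap J op X (J Y) - J (Qmap J op X Y) = -covDerJ J op X Y := by
  simp only [Qmap, covDerJ_apply_J hJ, hJ, map_smul, map_add, map_neg]
  module

end Involution

/-- For `Q(X,Y) := (1/4)·[(∇_{JY}J)X + J((∇_Y J)X) + 2·J((∇_X J)Y)]` one has
`Q(X, JY) − J(Q(X,Y)) = −(∇_X J)Y`. -/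
theorem Qmap_J_sub_J_Qmap
    {𝔛 : Type*} [AddCommGroup 𝔛] [Module ℝ 𝔛]
    (D : 𝔛 →ₗ[ℝ] 𝔛 →ₗ[ℝ] 𝔛) (J : 𝔛 →ₗ[ℝ] 𝔛)
    (hJ : ∀ X : 𝔛, J (J X) = X) :
    ∀ X Y : 𝔛,
      Qmap J (fun A B => D A B) X (J Y) - J (Qmap J (fun A B => D A B) X Y)
        = -covDerJ J (fun A B => D A B) X Y :=
  Qmap_apply_J_sub_J_Qmap hJ _
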